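/- Equivalence of the dual problem and its normalization: let b ∈ ℝⁿ with b ≠ 0 lie in the column space of A. Then OPT := max{ bᵀy : q(R★Aᵀy) ≤ 1 } is attained, finite and strictly positive, the minimum min{ q(R★Aᵀπ) : bᵀπ = 1 } is attained and equals 1/OPT, and if π* attains this minimum then f(π*) := π*/q(R★Aᵀπ*) attains the maximum OPT. -/
import Mathlib


open Matrix BigOperators

/-- Asymmetric "norm" `p(v) = Σᵢ max(0, vᵢ)`. -/
noncomputable def pnorm {d : Type*} [Fintype d] (v : d → ℝ) : ℝ := ∑ i, max (v i) 0

/-- Asymmetric "norm" `q(v) = max(0, maxᵢ vᵢ)`. -/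
noncomputable def qnorm {d : Type*} [Fintype d] (v : d → ℝ) : ℝ :=
  Finset.univ.fold max 0 v

/-- ∞-norm `‖v‖_∞ = maxᵢ |vᵢ|` (as `max(0, maxᵢ |vᵢ|)`, which agrees with it). -/
noncomputable def infnorm {d : Type*} [Fintype d] (v : d → ℝ) : ℝ :=
  Finset.univ.fold max 0 (fun i => |v i|)

/-- 1-norm `‖v‖₁ = Σᵢ |vᵢ|`. -/
noncomputable def onenorm {d : Type*} [Fintype d] (v : d → ℝ) : ℝ := ∑ i, |v i|

/-- `W★ : ℝᵐ → ℝ²ᵐ`, sending `x` to `(W₊x, −W₋x)`. -/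
noncomputable def Wstar {m : ℕ} (wp wm : Fin m → ℝ) (x : Fin m → ℝ) : Fin m ⊕ Fin m → ℝ :=
  Sum.elim (fun e => wp e * x e) (fun e => -(wm e * x e))

/-- `R★ : ℝᵐ → ℝ²ᵐ`, sending `x` to `(W₊⁻¹x, −W₋⁻¹x)`. -/
noncomputable def Rstar {m : ℕ} (wp wm : Fin m → ℝ) (x : Fin m → ℝ) : Fin m ⊕ Fin m → ℝ :=
  Sum.elim (fun e => x e / wp e) (fun e => -(x e / wm e))

/-- The transpose `R★ᵀ : ℝ²ᵐ → ℝᵐ`. -/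
noncomputable def RstarT {m : ℕ} (wp wm : Fin m → ℝ) (g : Fin m ⊕ Fin m → ℝ) : Fin m → ℝ :=
  fun e => g (Sum.inl e) / wp e - g (Sum.inr e) / wm e

/-- Soft-max `lse_β(v) = (1/β)·ln(Σᵢ e^{β·vᵢ})`. -/
noncomputable def lse {d : Type*} [Fintype d] (β : ℝ) (v : d → ℝ) : ℝ :=
  (1 / β) * Real.log (∑ i, Real.exp (β * v i))

/-- Gradient of the soft-max: `∇lse_β(v)ᵢ = e^{β·vᵢ}/Σⱼ e^{β·vⱼ}`. -/
noncomputable def gradLse {d : Type*} [Fintype d] (β : ℝ) (v : d → ℝ) : d → ℝ :=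
  fun i => Real.exp (β * v i) / ∑ j, Real.exp (β * v j)

/-- Potential `φ_β(π) = lse_β(R★Aᵀπ)`. -/
noncomputable def pot {n m : ℕ} (A : Matrix (Fin n) (Fin m) ℝ) (wp wm : Fin m → ℝ)
    (β : ℝ) (π : Fin n → ℝ) : ℝ :=
  lse β (Rstar wp wm (Aᵀ *ᵥ π))

/-- Gradient of the potential: `∇φ_β(π) = A·R★ᵀ·∇lse_β(R★Aᵀπ)`. -/
noncomputable def gradPot {n m : ℕ} (A : Matrix (Fin n) (Fin m) ℝ) (wp wm : Fin m → ℝ)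
    (β : ℝ) (π : Fin n → ℝ) : Fin n → ℝ :=
  A *ᵥ RstarT wp wm (gradLse β (Rstar wp wm (Aᵀ *ᵥ π)))
lemma qnorm_le_iff {d : Type*} [Fintype d] {v : d → ℝ} {c : ℝ} :
    qnorm v ≤ c ↔ 0 ≤ c ∧ ∀ i, v i ≤ c := by
  simp [qnorm, Finset.fold_max_le]

lemma qnorm_nonneg {d : Type*} [Fintype d] (v : d → ℝ) : 0 ≤ qnorm v :=
  (Finset.le_fold_max 0).2 (Or.inl le_rfl)

lemma le_qnorm {d : Type*} [Fintype d] (v : d → ℝ) (i : d) : v i ≤ qnorm v :=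
  (Finset.le_fold_max (v i)).2 (Or.inr ⟨i, Finset.mem_univ i, le_rfl⟩)

lemma qnorm_smul {d : Type*} [Fintype d] {t : ℝ} (ht : 0 ≤ t) (v : d → ℝ) :
    qnorm (t • v) = t * qnorm v := by
  rcases ht.eq_or_lt with h | h
  · subst h
    rw [zero_mul]
    refine le_antisymm (qnorm_le_iff.2 ⟨le_rfl, fun i => by simp⟩) ?_
    simpa using qnorm_nonneg ((0:ℝ) • v)
  · refine le_antisymm (qnorm_le_iff.2 ⟨mul_nonneg h.le (qnorm_nonneg v), fun i => ?_⟩) ?_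
    · simpa using mul_le_mul_of_nonneg_left (le_qnorm v i) h.le
    · rw [mul_comm, ← le_div_iff₀ h]
      refine qnorm_le_iff.2 ⟨div_nonneg (qnorm_nonneg _) h.le, fun i => ?_⟩
      rw [le_div_iff₀ h, mul_comm]
      simpa using le_qnorm (t • v) i

lemma Rstar_smul {m : ℕ} (wp wm : Fin m → ℝ) (t : ℝ) (v : Fin m → ℝ) :
    Rstar wp wm (t • v) = t • Rstar wp wm v := by
  funext i
  cases i with
  | inl e => simp [Rstar, mul_div_assoc]
  | inr e => simp [Rstar, mul_div_assoc]
/-- Equivalence of the dual problem and its normalization. -/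
theorem dual_normalization_equivalence {n m : ℕ} (hn : 1 ≤ n) (hm : 1 ≤ m)
    (A : Matrix (Fin n) (Fin m) ℝ) (wp wm : Fin m → ℝ)
    (hw : ∀ e, 0 < wm e ∧ wm e ≤ wp e)
    (b : Fin n → ℝ) (hb : b ≠ 0) (hbspan : ∃ x : Fin m → ℝ, A *ᵥ x = b) :
    ∃ OPT : ℝ,
      IsGreatest {c : ℝ | ∃ y : Fin n → ℝ,
        qnorm (Rstar wp wm (Aᵀ *ᵥ y)) ≤ 1 ∧ b ⬝ᵥ y = c} OPT ∧
      0 < OPT ∧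
      IsLeast {c : ℝ | ∃ π : Fin n → ℝ,
        b ⬝ᵥ π = 1 ∧ qnorm (Rstar wp wm (Aᵀ *ᵥ π)) = c} (1 / OPT) ∧
      ∀ π : Fin n → ℝ, b ⬝ᵥ π = 1 → qnorm (Rstar wp wm (Aᵀ *ᵥ π)) = 1 / OPT →
        qnorm (Rstar wp wm (Aᵀ *ᵥ
            (fun i => π i / qnorm (Rstar wp wm (Aᵀ *ᵥ π))))) ≤ 1 ∧
        b ⬝ᵥ (fun i => π i / qnorm (Rstar wp wm (Aᵀ *ᵥ π))) = OPT := by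
  obtain ⟨x, hx⟩ := hbspan
  have hwm : ∀ e, 0 < wm e := fun e => (hw e).1
  have hwp : ∀ e, 0 < wp e := fun e => (hwm e).trans_le (hw e).2
  have hdot : ∀ y : Fin n → ℝ, b ⬝ᵥ y = x ⬝ᵥ (Aᵀ *ᵥ y) := by
    intro y
    rw [Matrix.dotProduct_mulVec, Matrix.vecMul_transpose, hx]
  have hfeas : ∀ v : Fin m → ℝ,
      qnorm (Rstar wp wm v) ≤ 1 ↔ ∀ e, -wm e ≤ v e ∧ v e ≤ wp e := by
    intro v
    rw [qnorm_le_iff]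
    constructor
    · rintro ⟨-, h⟩ e
      have h1 := h (Sum.inl e)
      have h2 := h (Sum.inr e)
      simp only [Rstar, Sum.elim_inl, Sum.elim_inr] at h1 h2
      refine ⟨?_, (div_le_one (hwp e)).1 h1⟩
      have h3 : (-1 : ℝ) ≤ v e / wm e := by linarith
      have := (le_div_iff₀ (hwm e)).1 h3
      linarith
    · intro h
      refine ⟨zero_le_one, fun i => ?_⟩
      cases i with
      | inl e =>
        simpa [Rstar] using (div_le_one (hwp e)).2 (h e).2
      | inr e =>
        have h3 : (-1 : ℝ) ≤ v e / wm e := (le_div_iff₀ (hwm e)).2 (by linarith [(h e).1])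
        simpa [Rstar] using by linarith
  have hzero : ∀ v : Fin m → ℝ, qnorm (Rstar wp wm v) = 0 → v = 0 := by
    intro v hv
    funext e
    have h := qnorm_le_iff.1 hv.le
    have h1 := h.2 (Sum.inl e)
    have h2 := h.2 (Sum.inr e)
    simp only [Rstar, Sum.elim_inl, Sum.elim_inr] at h1 h2
    have h1' : v e ≤ 0 := by
      have := (div_le_iff₀ (hwp e)).1 h1; linarith
    have h2' : 0 ≤ v e / wm e := by linarith
    have := (le_div_iff₀ (hwm e)).1 h2'
    have : 0 ≤ v e := by linarith
    simp only [Pi.zero_apply]; linarith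
  have hbb0 : 0 ≤ b ⬝ᵥ b := Finset.sum_nonneg fun i _ => mul_self_nonneg _
  have hbbne : b ⬝ᵥ b ≠ 0 := fun h => hb (dotProduct_self_eq_zero.1 h)
  have hbbpos : 0 < b ⬝ᵥ b := hbb0.lt_of_ne (Ne.symm hbbne)
  set q0 := qnorm (Rstar wp wm (Aᵀ *ᵥ b)) with hq0def
  have hq0pos : 0 < q0 := by
    rcases (qnorm_nonneg (Rstar wp wm (Aᵀ *ᵥ b))).eq_or_lt with h | h
    · exfalso
      have hz := hzero _ h.symm
      have : b ⬝ᵥ b = 0 := by rw [hdot, hz]; simp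
      exact hbbne this
    · exact h
  -- the compact set
  set Kt : Set (Fin m → ℝ) :=
    (LinearMap.range (Matrix.mulVecLin Aᵀ) : Set (Fin m → ℝ)) ∩
      Set.univ.pi (fun e => Set.Icc (-wm e) (wp e)) with hKtdef
  have hKc : IsCompact Kt :=
    IsCompact.inter_left (isCompact_univ_pi fun e => isCompact_Icc)
      (Submodule.closed_of_finiteDimensional _)
  have hKne : Kt.Nonempty :=
    ⟨0, ⟨⟨0, by simp⟩, fun e _ => ⟨by simp [(hwm e).le], (hwp e).le⟩⟩⟩
  have hcont : Continuous fun z : Fin m → ℝ => x ⬝ᵥ z := by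
    unfold dotProduct
    exact continuous_finset_sum _ fun i _ => continuous_const.mul (continuous_apply i)
  obtain ⟨OPT, hOPT⟩ := (hKc.image hcont).exists_isGreatest (hKne.image _)
  have hset : (fun z => x ⬝ᵥ z) '' Kt =
      {c : ℝ | ∃ y : Fin n → ℝ, qnorm (Rstar wp wm (Aᵀ *ᵥ y)) ≤ 1 ∧ b ⬝ᵥ y = c} := by
    ext c
    constructor
    · rintro ⟨z, ⟨⟨y, hy⟩, hbox⟩, rfl⟩
      rw [Matrix.mulVecLin_apply] at hy
      refine ⟨y, ?_, ?_⟩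
      · rw [hfeas]
        intro e
        have := hbox e (Set.mem_univ e)
        rw [hy]
        exact ⟨this.1, this.2⟩
      · rw [hdot, hy]
    · rintro ⟨y, hy1, rfl⟩
      refine ⟨Aᵀ *ᵥ y, ⟨⟨y, by rw [Matrix.mulVecLin_apply]⟩, fun e _ => ?_⟩, (hdot y).symm⟩
      exact ⟨((hfeas _).1 hy1 e).1, ((hfeas _).1 hy1 e).2⟩
  rw [hset] at hOPT
  -- positivity of OPT
  have hmem0 : q0⁻¹ * (b ⬝ᵥ b) ∈
      {c : ℝ | ∃ y : Fin n → ℝ, qnorm (Rstar wp wm (Aᵀ *ᵥ y)) ≤ 1 ∧ b ⬝ᵥ y = c} := by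
    refine ⟨q0⁻¹ • b, ?_, ?_⟩
    · rw [Matrix.mulVec_smul, Rstar_smul, qnorm_smul (inv_nonneg.2 hq0pos.le), ← hq0def,
        inv_mul_cancel₀ hq0pos.ne']
    · rw [dotProduct_smul, smul_eq_mul]
  have hOPTpos : 0 < OPT :=
    lt_of_lt_of_le (mul_pos (inv_pos.2 hq0pos) hbbpos) (hOPT.2 hmem0)
  have hlb : ∀ π : Fin n → ℝ, b ⬝ᵥ π = 1 → 1 / OPT ≤ qnorm (Rstar wp wm (Aᵀ *ᵥ π)) := by
    intro π hπ
    set c := qnorm (Rstar wp wm (Aᵀ *ᵥ π)) with hc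
    have hcne : c ≠ 0 := by
      intro h
      have hz := hzero _ h
      have h1 : (1 : ℝ) = 0 := by rw [← hπ, hdot, hz]; simp
      norm_num at h1
    have hcpos : 0 < c := (qnorm_nonneg _).lt_of_ne (Ne.symm hcne)
    have hmem : c⁻¹ ∈
        {c : ℝ | ∃ y : Fin n → ℝ, qnorm (Rstar wp wm (Aᵀ *ᵥ y)) ≤ 1 ∧ b ⬝ᵥ y = c} := by
      refine ⟨c⁻¹ • π, ?_, ?_⟩
      · rw [Matrix.mulVec_smul, Rstar_smul, qnorm_smul (inv_nonneg.2 hcpos.le), ← hc,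
          inv_mul_cancel₀ hcne]
      · rw [dotProduct_smul, hπ, smul_eq_mul, mul_one]
    have hle := hOPT.2 hmem
    rw [div_le_iff₀ hOPTpos]
    calc (1 : ℝ) = c * c⁻¹ := (mul_inv_cancel₀ hcne).symm
      _ ≤ c * OPT := mul_le_mul_of_nonneg_left hle hcpos.le
  obtain ⟨⟨ystar, hys1, hys2⟩, hub⟩ := hOPT
  have hleast : IsLeast {c : ℝ | ∃ π : Fin n → ℝ,
      b ⬝ᵥ π = 1 ∧ qnorm (Rstar wp wm (Aᵀ *ᵥ π)) = c} (1 / OPT) := by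
    constructor
    · refine ⟨OPT⁻¹ • ystar, ?_, ?_⟩
      · rw [dotProduct_smul, hys2, smul_eq_mul, inv_mul_cancel₀ hOPTpos.ne']
      · have hval : qnorm (Rstar wp wm (Aᵀ *ᵥ (OPT⁻¹ • ystar))) =
            OPT⁻¹ * qnorm (Rstar wp wm (Aᵀ *ᵥ ystar)) := by
          rw [Matrix.mulVec_smul, Rstar_smul, qnorm_smul (inv_nonneg.2 hOPTpos.le)]
        refine le_antisymm ?_ ?_
        · rw [hval, one_div]
          calc OPT⁻¹ * qnorm (Rstar wp wm (Aᵀ *ᵥ ystar)) ≤ OPT⁻¹ * 1 :=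
                mul_le_mul_of_nonneg_left hys1 (inv_nonneg.2 hOPTpos.le)
            _ = OPT⁻¹ := mul_one _
        · exact hlb _ (by rw [dotProduct_smul, hys2, smul_eq_mul,
            inv_mul_cancel₀ hOPTpos.ne'])
    · rintro c ⟨π, hπ1, rfl⟩
      exact hlb π hπ1
  refine ⟨OPT, ⟨⟨ystar, hys1, hys2⟩, hub⟩, hOPTpos, hleast, ?_⟩
  intro π hπ1 hπq
  have heq : (fun i => π i / qnorm (Rstar wp wm (Aᵀ *ᵥ π))) = OPT • π := by
    funext i
    rw [hπq, Pi.smul_apply, smul_eq_mul, div_div_eq_mul_div, div_one, mul_comm]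
  rw [heq]
  constructor
  · rw [Matrix.mulVec_smul, Rstar_smul, qnorm_smul hOPTpos.le, hπq]
    rw [mul_one_div, div_self hOPTpos.ne']
  · rw [dotProduct_smul, hπ1, smul_eq_mul, mul_one]
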